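/- Generalized monomorphism: for each k ≥ 1 and each i with 1 ≤ i ≤ k+1, the map χ_i sending the k-Riordan tuple (g(z^k), f₁(z^k)/z^{k-1}, ..., f_k(z^k)/z^{k-1}) to the (k+1)-Riordan tuple obtained by substituting z^{k+1} for z^k throughout (yielding entries f_j(z^{k+1})/z^k) and inserting the multiplier z in position i, is an injective group homomorphism from the k-Riordan group to the (k+1)-Riordan group. -/

import Mathlib

open PowerSeries

variable {K : Type*} [Field K]

/-- Composition (substitution) of formal power series: `pcomp A f = A ∘ f`,
intended for `f` with zero constant term, where `coeff n (f ^ k) = 0` for `k > n`. -/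
noncomputable def pcomp (A f : PowerSeries K) : PowerSeries K :=
  PowerSeries.mk fun n => ∑ k ∈ Finset.range (n + 1), coeff k A * coeff n (f ^ k)

/-- The m-Riordan product relation: (g", a") = (g, a) * (G, A), computed via an
m-th root h of a₁···a_m (zero constant term, nonzero linear coefficient) and
quotients q i = a i / h. -/
noncomputable def kRmul (m : ℕ) (g : PowerSeries K) (a : Fin m → PowerSeries K)
    (G : PowerSeries K) (A : Fin m → PowerSeries K)
    (g'' : PowerSeries K) (a'' : Fin m → PowerSeries K) : Prop :=
  ∃ (h : PowerSeries K) (q : Fin m → PowerSeries K),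
    constantCoeff h = 0 ∧ coeff 1 h ≠ 0 ∧ h ^ m = ∏ i, a i ∧
    (∀ i, q i * h = a i) ∧
    g'' = g * pcomp G h ∧ (∀ i, a'' i = q i * pcomp (A i) h)

namespace Stmt18Aux

lemma coeff_pow_zero_of_lt {f : PowerSeries K} (hf : constantCoeff f = 0)
    {n j : ℕ} (h : n < j) : coeff n (f ^ j) = 0 := by
  have hd : (X : PowerSeries K) ^ j ∣ f ^ j :=
    pow_dvd_pow_of_dvd (X_dvd_iff.mpr hf) j
  exact X_pow_dvd_iff.mp hd n h

lemma coeff_pcomp (A f : PowerSeries K) (n : ℕ) :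
    coeff n (pcomp A f) = ∑ j ∈ Finset.range (n + 1), coeff j A * coeff n (f ^ j) := by
  simp [pcomp]

lemma coeff_pcomp_eq_sum {f : PowerSeries K} (hf : constantCoeff f = 0)
    (A : PowerSeries K) {n N : ℕ} (h : n < N) :
    coeff n (pcomp A f) = ∑ j ∈ Finset.range N, coeff j A * coeff n (f ^ j) := by
  rw [coeff_pcomp]
  apply Finset.sum_subset (Finset.range_subset_range.mpr h)
  intro j _ hj
  simp only [Finset.mem_range] at hj
  rw [coeff_pow_zero_of_lt hf (by omega), mul_zero]

lemma coeff_pcomp_congr {A B f : PowerSeries K} {n : ℕ}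
    (h : ∀ j ≤ n, coeff j A = coeff j B) :
    coeff n (pcomp A f) = coeff n (pcomp B f) := by
  rw [coeff_pcomp, coeff_pcomp]
  refine Finset.sum_congr rfl fun j hj => ?_
  simp only [Finset.mem_range] at hj
  rw [h j (by omega)]

lemma coeff_pcomp_coe {f : PowerSeries K} (hf : constantCoeff f = 0)
    (p : Polynomial K) (n : ℕ) :
    coeff n (pcomp (p : PowerSeries K) f) = coeff n (Polynomial.aeval f p) := by
  rw [coeff_pcomp_eq_sum hf _
      (show n < max (p.natDegree + 1) (n + 1) from lt_max_iff.mpr (Or.inr (Nat.lt_succ_self n))),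
    Polynomial.aeval_eq_sum_range' (lt_max_iff.mpr (Or.inl (Nat.lt_succ_self _))), map_sum]
  refine Finset.sum_congr rfl fun j _ => ?_
  rw [Polynomial.coeff_coe, LinearMap.map_smul, smul_eq_mul]

lemma pcomp_mul {f : PowerSeries K} (hf : constantCoeff f = 0) (A B : PowerSeries K) :
    pcomp (A * B) f = pcomp A f * pcomp B f := by
  ext n
  set TA := trunc (n + 1) A with hTA
  set TB := trunc (n + 1) B with hTB
  have htr : ∀ (C : PowerSeries K) (T : Polynomial K), trunc (n + 1) C = T →
      ∀ j ≤ n, coeff j ((T : PowerSeries K)) = coeff j C := by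
    intro C T hT j hj
    rw [Polynomial.coeff_coe, ← hT, coeff_trunc, if_pos (by omega)]
  have h1 : coeff n (pcomp (A * B) f)
      = coeff n (pcomp ((TA * TB : Polynomial K) : PowerSeries K) f) := by
    apply coeff_pcomp_congr
    intro j hj
    have h2 : trunc (n + 1) (A * B)
        = trunc (n + 1) (((TA * TB : Polynomial K) : PowerSeries K)) := by
      rw [Polynomial.coe_mul, hTA, hTB, trunc_trunc_mul_trunc]
    have := congrArg (fun p => Polynomial.coeff p j) h2
    simp only [coeff_trunc, if_pos (show j < n + 1 by omega)] at this
    exact this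
  rw [h1, coeff_pcomp_coe hf, map_mul, PowerSeries.coeff_mul, PowerSeries.coeff_mul]
  refine Finset.sum_congr rfl fun st hst => ?_
  have h1 : st.1 ≤ n := Finset.HasAntidiagonal.antidiagonal.fst_le hst
  have h2 : st.2 ≤ n := Finset.HasAntidiagonal.antidiagonal.snd_le hst
  rw [← coeff_pcomp_coe hf, ← coeff_pcomp_coe hf,
    coeff_pcomp_congr (fun j hj => htr A TA hTA.symm j (le_trans hj h1)),
    coeff_pcomp_congr (fun j hj => htr B TB hTB.symm j (le_trans hj h2))]

lemma pcomp_one (f : PowerSeries K) : pcomp (1 : PowerSeries K) f = 1 := by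
  ext n
  rw [coeff_pcomp]
  simp only [coeff_one, ite_mul, one_mul, zero_mul]
  rw [Finset.sum_ite_eq' (Finset.range (n + 1)) 0 (fun j => coeff n (f ^ j))]
  simp

lemma pcomp_X {f : PowerSeries K} (hf : constantCoeff f = 0) :
    pcomp (X : PowerSeries K) f = f := by
  ext n
  rw [coeff_pcomp]
  simp only [coeff_X, ite_mul, one_mul, zero_mul]
  rw [Finset.sum_ite_eq' (Finset.range (n + 1)) 1 (fun j => coeff n (f ^ j))]
  cases n with
  | zero => simpa using hf.symm
  | succ n => simp [Finset.mem_range]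

lemma pcomp_pow {f : PowerSeries K} (hf : constantCoeff f = 0) (A : PowerSeries K) (p : ℕ) :
    pcomp (A ^ p) f = (pcomp A f) ^ p := by
  induction p with
  | zero => simpa using pcomp_one f
  | succ p ih => rw [pow_succ, pow_succ, pcomp_mul hf, ih]

lemma pcomp_prod {f : PowerSeries K} (hf : constantCoeff f = 0)
    {ι : Type*} (s : Finset ι) (A : ι → PowerSeries K) :
    pcomp (∏ i ∈ s, A i) f = ∏ i ∈ s, pcomp (A i) f := by
  classical
  induction s using Finset.cons_induction with
  | empty => simpa using pcomp_one f
  | cons a s ha ih => rw [Finset.prod_cons, Finset.prod_cons, pcomp_mul hf, ih]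

lemma constantCoeff_pcomp (A f : PowerSeries K) :
    constantCoeff (pcomp A f) = constantCoeff A := by
  rw [← coeff_zero_eq_constantCoeff_apply, ← coeff_zero_eq_constantCoeff_apply, coeff_pcomp]
  simp

lemma coeff_one_pcomp (A f : PowerSeries K) :
    coeff 1 (pcomp A f) = coeff 1 A * coeff 1 f := by
  rw [coeff_pcomp]
  rw [Finset.sum_range_succ, Finset.sum_range_one]
  simp [coeff_one]

lemma pcomp_assoc (A : PowerSeries K) {B C : PowerSeries K}
    (hB : constantCoeff B = 0) (hC : constantCoeff C = 0) :
    pcomp (pcomp A B) C = pcomp A (pcomp B C) := by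
  have hBC : constantCoeff (pcomp B C) = 0 := by rw [constantCoeff_pcomp]; exact hB
  ext n
  calc coeff n (pcomp (pcomp A B) C)
      = ∑ j ∈ Finset.range (n + 1), (∑ p ∈ Finset.range (n + 1),
          coeff p A * coeff j (B ^ p)) * coeff n (C ^ j) := by
        rw [coeff_pcomp]
        exact Finset.sum_congr rfl fun j hj => by
          rw [coeff_pcomp_eq_sum hB A (Finset.mem_range.mp hj)]
    _ = ∑ p ∈ Finset.range (n + 1), coeff p A *
          ∑ j ∈ Finset.range (n + 1), coeff j (B ^ p) * coeff n (C ^ j) := by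
        simp_rw [Finset.sum_mul, Finset.mul_sum, mul_assoc]
        exact Finset.sum_comm
    _ = ∑ p ∈ Finset.range (n + 1), coeff p A * coeff n ((pcomp B C) ^ p) := by
        refine Finset.sum_congr rfl fun p _ => ?_
        rw [← pcomp_pow hC, coeff_pcomp_eq_sum hC _ (Nat.lt_succ_self n)]
    _ = coeff n (pcomp A (pcomp B C)) :=
        (coeff_pcomp_eq_sum hBC A (Nat.lt_succ_self n)).symm

lemma coeff_pcomp_X_pow (A : PowerSeries K) {m : ℕ} (hm : 0 < m) (n : ℕ) :
    coeff (n * m) (pcomp A ((X : PowerSeries K) ^ m)) = coeff n A := by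
  rw [coeff_pcomp]
  have hmem : n ∈ Finset.range (n * m + 1) := by
    rw [Finset.mem_range]
    have := Nat.le_mul_of_pos_right n hm
    omega
  rw [Finset.sum_eq_single n]
  · rw [← pow_mul, coeff_X_pow, if_pos (Nat.mul_comm n m)]
    ring
  · intro j _ hj
    rw [← pow_mul, coeff_X_pow, if_neg, mul_zero]
    intro hc
    rw [Nat.mul_comm n m] at hc
    exact hj (Nat.eq_of_mul_eq_mul_left hm hc).symm
  · intro h; exact absurd hmem h

lemma pcomp_X_pow_inj {m : ℕ} (hm : 0 < m) {A B : PowerSeries K}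
    (h : pcomp A ((X : PowerSeries K) ^ m) = pcomp B ((X : PowerSeries K) ^ m)) : A = B := by
  ext n
  rw [← coeff_pcomp_X_pow A hm n, ← coeff_pcomp_X_pow B hm n, h]

end Stmt18Aux

open Stmt18Aux

/-- Generalized Monomorphism Theorem: for k ≥ 1 and 1 ≤ i ≤ k+1, the map χᵢ
sending (g(zᵏ), f₁(zᵏ)/zᵏ⁻¹, …, f_k(zᵏ)/zᵏ⁻¹) to the (k+1)-Riordan array
(g(zᵏ⁺¹), …, fⱼ(zᵏ⁺¹)/zᵏ, …) with the multiplier z inserted in position i,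
is an injective group homomorphism: any (k+1)-Riordan product of two images is
the image of the corresponding k-Riordan product, and equal images force equal
arguments. -/
theorem stmt18 (k : ℕ) (hk : 1 ≤ k) (i : Fin (k + 1)) :
    (∀ (g G g₂ : PowerSeries K) (f F : Fin k → PowerSeries K)
        (fc Fc a₂ : Fin k → PowerSeries K) (fcp Fcp : Fin k → PowerSeries K),
      constantCoeff g ≠ 0 →
      (∀ j, constantCoeff (f j) = 0 ∧ coeff 1 (f j) ≠ 0) →
      constantCoeff G ≠ 0 →
      (∀ j, constantCoeff (F j) = 0 ∧ coeff 1 (F j) ≠ 0) →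
      (∀ j, X ^ (k - 1) * fc j = pcomp (f j) (X ^ k)) →
      (∀ j, X ^ (k - 1) * Fc j = pcomp (F j) (X ^ k)) →
      (∀ j, X ^ k * fcp j = pcomp (f j) (X ^ (k + 1))) →
      (∀ j, X ^ k * Fcp j = pcomp (F j) (X ^ (k + 1))) →
      kRmul k (pcomp g (X ^ k)) fc (pcomp G (X ^ k)) Fc g₂ a₂ →
      ∀ (G₂ : PowerSeries K) (A₂ : Fin (k + 1) → PowerSeries K),
        kRmul (k + 1) (pcomp g (X ^ (k + 1))) (i.insertNth X fcp)
          (pcomp G (X ^ (k + 1))) (i.insertNth X Fcp) G₂ A₂ →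
        ∃ (g'' : PowerSeries K) (f'' fcp'' : Fin k → PowerSeries K),
          constantCoeff g'' ≠ 0 ∧
          (∀ j, constantCoeff (f'' j) = 0 ∧ coeff 1 (f'' j) ≠ 0) ∧
          pcomp g'' (X ^ k) = g₂ ∧
          (∀ j, X ^ (k - 1) * a₂ j = pcomp (f'' j) (X ^ k)) ∧
          (∀ j, X ^ k * fcp'' j = pcomp (f'' j) (X ^ (k + 1))) ∧
          G₂ = pcomp g'' (X ^ (k + 1)) ∧
          A₂ = i.insertNth X fcp'') ∧
    (∀ (g G : PowerSeries K) (f F fcp Fcp : Fin k → PowerSeries K),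
      constantCoeff g ≠ 0 →
      (∀ j, constantCoeff (f j) = 0 ∧ coeff 1 (f j) ≠ 0) →
      constantCoeff G ≠ 0 →
      (∀ j, constantCoeff (F j) = 0 ∧ coeff 1 (F j) ≠ 0) →
      (∀ j, X ^ k * fcp j = pcomp (f j) (X ^ (k + 1))) →
      (∀ j, X ^ k * Fcp j = pcomp (F j) (X ^ (k + 1))) →
      pcomp g (X ^ (k + 1)) = pcomp G (X ^ (k + 1)) →
      (i.insertNth X fcp : Fin (k + 1) → PowerSeries K) = i.insertNth X Fcp →
      g = G ∧ f = F) := by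
  obtain ⟨s, rfl⟩ : ∃ s, k = s + 1 := ⟨k - 1, by omega⟩
  have hXne : (X : PowerSeries K) ≠ 0 := X_ne_zero
  have hXk0 : constantCoeff ((X : PowerSeries K) ^ (s + 1)) = 0 := by
    rw [map_pow, constantCoeff_X, zero_pow (by omega : s + 1 ≠ 0)]
  have hXk10 : constantCoeff ((X : PowerSeries K) ^ (s + 1 + 1)) = 0 := by
    rw [map_pow, constantCoeff_X, zero_pow (by omega : s + 1 + 1 ≠ 0)]
  constructor
  · intro g G g₂ f F fc Fc a₂ fcp Fcp hg hf hG hF hfc hFc hfcp hFcp hmul G₂ A₂ hmul2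
    simp only [Nat.add_sub_cancel] at hfc hFc ⊢
    obtain ⟨h, q, hh0, hh1, hhk, hq, hg2, ha2⟩ := hmul
    obtain ⟨H, Q, hH0, hH1, hHk, hQ, hG2, hA2⟩ := hmul2
    have hhne : h ≠ 0 := fun h0 => hh1 (by rw [h0]; simp)
    have hHne : H ≠ 0 := fun h0 => hH1 (by rw [h0]; simp)
    have hhkne : h ^ (s + 1) ≠ 0 := pow_ne_zero _ hhne
    have hHkne : H ^ (s + 1 + 1) ≠ 0 := pow_ne_zero _ hHne
    choose u hu using fun j => X_dvd_iff.mpr (hf j).1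
    set R : PowerSeries K := ∏ j, u j with hR
    have hco : ∀ φ : PowerSeries K, coeff 1 (X * φ) = constantCoeff φ := by
      intro φ
      have h1 := coeff_succ_X_mul 0 φ
      rwa [coeff_zero_eq_constantCoeff_apply, zero_add] at h1
    have hu1 : ∀ j, constantCoeff (u j) = coeff 1 (f j) := by
      intro j
      rw [hu j, hco]
    have hR0 : constantCoeff R ≠ 0 := by
      rw [hR, map_prod]
      exact Finset.prod_ne_zero_iff.mpr fun j _ => by rw [hu1 j]; exact (hf j).2
    set m : PowerSeries K := X * R with hm
    have hm0 : constantCoeff m = 0 := by rw [hm, map_mul, constantCoeff_X, zero_mul]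
    have hm1 : coeff 1 m ≠ 0 := by
      rw [hm, hco]
      exact hR0
    have hPX : (∏ j, f j) = X ^ s * m := by
      have h1 : (∏ j, f j) = X ^ (s + 1) * R := by
        rw [hR]
        calc (∏ j, f j) = ∏ j, (X * u j) := Finset.prod_congr rfl fun j _ => hu j
          _ = (∏ _j : Fin (s + 1), (X : PowerSeries K)) * ∏ j, u j :=
              Finset.prod_mul_distrib
          _ = X ^ (s + 1) * ∏ j, u j := by
              rw [Finset.prod_const, Finset.card_univ, Fintype.card_fin]
      rw [h1, hm, pow_succ]; ring
    have key : ∀ t : ℕ, constantCoeff ((X : PowerSeries K) ^ t) = 0 →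
        pcomp (∏ j, f j) ((X : PowerSeries K) ^ t)
          = ((X : PowerSeries K) ^ t) ^ s * pcomp m ((X : PowerSeries K) ^ t) := by
      intro t ht
      rw [hPX, pcomp_mul ht, pcomp_pow ht, pcomp_X ht]
    have hmk : pcomp m ((X : PowerSeries K) ^ (s + 1)) = h ^ (s + 1) := by
      have h2 : pcomp (∏ j, f j) ((X : PowerSeries K) ^ (s + 1))
          = (X : PowerSeries K) ^ (s * (s + 1)) * h ^ (s + 1) := by
        rw [pcomp_prod hXk0,
          show (∏ j, pcomp (f j) ((X : PowerSeries K) ^ (s + 1)))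
              = ∏ j, ((X : PowerSeries K) ^ s * fc j) from
            Finset.prod_congr rfl fun j _ => (hfc j).symm,
          Finset.prod_mul_distrib, Finset.prod_const, Finset.card_univ, Fintype.card_fin,
          ← hhk, ← pow_mul]
      have h1 := key (s + 1) hXk0
      rw [h2, ← pow_mul, Nat.mul_comm s (s + 1)] at h1
      exact (mul_left_cancel₀ (pow_ne_zero _ hXne) h1).symm
    have hHprod : H ^ (s + 1 + 1) = X * ∏ j, fcp j := by
      rw [hHk, Fin.prod_univ_succAbove (i.insertNth X fcp) i, Fin.insertNth_apply_same]
      congr 1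
      exact Finset.prod_congr rfl fun j _ => by rw [Fin.insertNth_apply_succAbove]
    have hmk1 : pcomp m ((X : PowerSeries K) ^ (s + 1 + 1)) = H ^ (s + 1 + 1) := by
      have h2 : pcomp (∏ j, f j) ((X : PowerSeries K) ^ (s + 1 + 1))
          = (X : PowerSeries K) ^ ((s + 1) * (s + 1)) * ∏ j, fcp j := by
        rw [pcomp_prod hXk10,
          show (∏ j, pcomp (f j) ((X : PowerSeries K) ^ (s + 1 + 1)))
              = ∏ j, ((X : PowerSeries K) ^ (s + 1) * fcp j) from
            Finset.prod_congr rfl fun j _ => (hfcp j).symm,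
          Finset.prod_mul_distrib, Finset.prod_const, Finset.card_univ, Fintype.card_fin,
          ← pow_mul]
      have h1 := key (s + 1 + 1) hXk10
      rw [h2, ← pow_mul] at h1
      apply mul_left_cancel₀ (pow_ne_zero ((s + 1 + 1) * s) hXne)
      rw [← h1, hHprod, show (s + 1) * (s + 1) = (s + 1 + 1) * s + 1 by ring, pow_succ]
      ring
    have hFm0 : ∀ j : Fin (s + 1), constantCoeff (pcomp (F j) m) = 0 := fun j => by
      rw [constantCoeff_pcomp]; exact (hF j).1
    choose w hw using fun j => X_dvd_iff.mpr (hFm0 j)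
    have hRinv : R * R⁻¹ = 1 := PowerSeries.mul_inv_cancel R hR0
    set c : Fin (s + 1) → PowerSeries K := fun j => u j * w j * R⁻¹ with hc
    have hfm : ∀ j, (X * c j) * m = f j * pcomp (F j) m := by
      intro j
      rw [hu j, hw j, hm]
      have h2 : X * (c j) * (X * R) = (X * u j) * (X * w j) * (R * R⁻¹) := by
        rw [hc]; ring
      rw [h2, hRinv, mul_one]
    refine ⟨g * pcomp G m, fun j => X * c j,
      fun j => X * pcomp (c j) ((X : PowerSeries K) ^ (s + 1 + 1)), ?_, ?_, ?_, ?_, ?_, ?_, ?_⟩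
    · rw [map_mul, constantCoeff_pcomp]
      exact mul_ne_zero hg hG
    · intro j
      constructor
      · rw [map_mul, constantCoeff_X, zero_mul]
      · show coeff 1 (X * c j) ≠ 0
        rw [hco, hc]
        simp only [map_mul]
        refine mul_ne_zero (mul_ne_zero ?_ ?_) ?_
        · rw [hu1 j]; exact (hf j).2
        · have h1 : coeff 1 (pcomp (F j) m) = coeff 1 (F j) * coeff 1 m :=
            coeff_one_pcomp _ _
          rw [hw j, hco] at h1
          rw [h1]; exact mul_ne_zero (hF j).2 hm1
        · intro h0
          have h1 := congrArg (constantCoeff) hRinv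
          rw [map_mul, h0, mul_zero, map_one] at h1
          exact zero_ne_one h1
    · rw [hg2, pcomp_mul hXk0]
      congr 1
      rw [pcomp_assoc G hm0 hXk0, hmk, pcomp_assoc G hXk0 hh0, pcomp_pow hh0, pcomp_X hh0]
    · intro j
      rw [ha2 j]
      apply mul_right_cancel₀ hhkne
      calc X ^ s * (q j * pcomp (Fc j) h) * h ^ (s + 1)
          = (X ^ s * (q j * h)) * ((pcomp (X : PowerSeries K) h) ^ s * pcomp (Fc j) h) := by
            rw [pcomp_X hh0, pow_succ]; ring
        _ = (X ^ s * fc j) * pcomp ((X : PowerSeries K) ^ s * Fc j) h := by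
            rw [hq j, pcomp_mul hh0, pcomp_pow hh0]
        _ = pcomp (f j) ((X : PowerSeries K) ^ (s + 1))
              * pcomp (pcomp (F j) ((X : PowerSeries K) ^ (s + 1))) h := by
            rw [hfc j, hFc j]
        _ = pcomp (f j) ((X : PowerSeries K) ^ (s + 1))
              * pcomp (pcomp (F j) m) ((X : PowerSeries K) ^ (s + 1)) := by
            rw [pcomp_assoc (F j) hXk0 hh0, pcomp_assoc (F j) hm0 hXk0, hmk,
              pcomp_pow hh0, pcomp_X hh0]
        _ = pcomp (f j * pcomp (F j) m) ((X : PowerSeries K) ^ (s + 1)) :=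
            (pcomp_mul hXk0 _ _).symm
        _ = pcomp ((X * c j) * m) ((X : PowerSeries K) ^ (s + 1)) := by rw [hfm j]
        _ = pcomp (X * c j) ((X : PowerSeries K) ^ (s + 1)) * h ^ (s + 1) := by
            rw [pcomp_mul hXk0, hmk]
    · intro j
      rw [pcomp_mul hXk10, pcomp_X hXk10]
      ring
    · rw [hG2, pcomp_mul hXk10]
      congr 1
      rw [pcomp_assoc G hm0 hXk10, hmk1, pcomp_assoc G hXk10 hH0, pcomp_pow hH0, pcomp_X hH0]
    · funext j'
      by_cases hji : j' = i
      · subst hji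
        rw [hA2 j', Fin.insertNth_apply_same, Fin.insertNth_apply_same, pcomp_X hH0]
        have h1 := hQ j'
        rwa [Fin.insertNth_apply_same] at h1
      · obtain ⟨j, rfl⟩ := Fin.exists_succAbove_eq hji
        rw [hA2, Fin.insertNth_apply_succAbove, Fin.insertNth_apply_succAbove]
        have hQj : Q (i.succAbove j) * H = fcp j := by
          have h1 := hQ (i.succAbove j)
          rwa [Fin.insertNth_apply_succAbove] at h1
        apply mul_left_cancel₀ (pow_ne_zero (s + 1) hXne)
        apply mul_right_cancel₀ hHkne
        calc X ^ (s + 1) * (Q (i.succAbove j) * pcomp (Fcp j) H) * H ^ (s + 1 + 1)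
            = (X ^ (s + 1) * (Q (i.succAbove j) * H))
                * ((pcomp (X : PowerSeries K) H) ^ (s + 1) * pcomp (Fcp j) H) := by
              rw [pcomp_X hH0, pow_succ]; ring
          _ = (X ^ (s + 1) * fcp j) * pcomp ((X : PowerSeries K) ^ (s + 1) * Fcp j) H := by
              rw [hQj, pcomp_mul hH0, pcomp_pow hH0]
          _ = pcomp (f j) ((X : PowerSeries K) ^ (s + 1 + 1))
                * pcomp (pcomp (F j) ((X : PowerSeries K) ^ (s + 1 + 1))) H := by
              rw [hfcp j, hFcp j]
          _ = pcomp (f j) ((X : PowerSeries K) ^ (s + 1 + 1))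
                * pcomp (pcomp (F j) m) ((X : PowerSeries K) ^ (s + 1 + 1)) := by
              rw [pcomp_assoc (F j) hXk10 hH0, pcomp_assoc (F j) hm0 hXk10, hmk1,
                pcomp_pow hH0, pcomp_X hH0]
          _ = pcomp (f j * pcomp (F j) m) ((X : PowerSeries K) ^ (s + 1 + 1)) :=
              (pcomp_mul hXk10 _ _).symm
          _ = pcomp ((X * c j) * m) ((X : PowerSeries K) ^ (s + 1 + 1)) := by rw [hfm j]
          _ = X ^ (s + 1) * (X * pcomp (c j) ((X : PowerSeries K) ^ (s + 1 + 1)))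
                * H ^ (s + 1 + 1) := by
              rw [pcomp_mul hXk10, pcomp_mul hXk10, pcomp_X hXk10, hmk1]
              ring
  · intro g G f F fcp Fcp hg hf hG hF hfcp hFcp hgG hins
    have hpos : 0 < s + 1 + 1 := by omega
    refine ⟨pcomp_X_pow_inj hpos hgG, funext fun j => ?_⟩
    apply pcomp_X_pow_inj hpos
    rw [← hfcp j, ← hFcp j]
    have h1 := congrFun hins (i.succAbove j)
    rw [Fin.insertNth_apply_succAbove, Fin.insertNth_apply_succAbove] at h1
    rw [h1]
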